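/- arXiv:math/0612184 — 3 statements merged into one kernel-verified Lean document; each statement's English description precedes it below -/
import Mathlib

section
/- Let F be a real quadratic field embedded in ℝ with ring of integers O_F, and let L be a pseudolattice in ℝ. Then {α ∈ ℝ : αL ⊆ L} = O_F if and only if L is homothetic (equal up to multiplication by a nonzero real number) to a fractional ideal of F. -/
open NumberField
open scoped nonZeroDivisors

/-- A pseudolattice: a dense additive subgroup of `ℝ` of rank two. -/
def IsPseudolattice (L : AddSubgroup ℝ) : Prop :=
  Dense (L : Set ℝ) ∧ ∃ ω₁ ω₂ : ℝ, LinearIndependent ℚ ![ω₁, ω₂] ∧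
    (L : Set ℝ) = {x : ℝ | ∃ m n : ℤ, x = m * ω₁ + n * ω₂}

theorem exists_integral_multiple {R A : Type*} [CommRing R] [CommRing A] [Algebra R A] {z : A}
    (hz : IsAlgebraic R z) (_inj : ∀ x, algebraMap R A x = 0 → x = 0) :
    ∃ x : integralClosure R A, ∃ y ≠ (0 : R), algebraMap R A y * z = x := by
  obtain ⟨y, hy, h⟩ := hz.exists_integral_multiple
  exact ⟨⟨_, h⟩, y, hy, by simp [Algebra.smul_def]⟩

/-- for a real quadratic field `F ⊆ ℝ` (via the embedding `ι`)
and a pseudolattice `L ⊆ ℝ`, the multiplier ring `{α ∈ ℝ : αL ⊆ L}` equals `O_F`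
iff `L` is homothetic to a fractional ideal of `F`. -/
theorem multiplier_eq_ringOfIntegers_iff_homothetic_fractionalIdeal
    (F : Type*) [Field F] [NumberField F] (hF : Module.finrank ℚ F = 2)
    (ι : F →+* ℝ) (L : AddSubgroup ℝ) (hL : IsPseudolattice L) :
    {α : ℝ | ∀ x ∈ L, α * x ∈ L} =
      Set.range (fun a : 𝓞 F => ι (algebraMap (𝓞 F) F a)) ↔
    ∃ (J : FractionalIdeal (𝓞 F)⁰ F) (lam : ℝ), J ≠ 0 ∧ lam ≠ 0 ∧
      (L : Set ℝ) = (fun x : F => lam * ι x) '' ((J : Submodule (𝓞 F) F) : Set F) := by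
  obtain ⟨-, ω₁, ω₂, hindep, hLset⟩ := hL
  have hι : Function.Injective ι := ι.injective
  have hω₁ : ω₁ ≠ 0 := by
    have := hindep.ne_zero 0
    simpa using this
  have memL : ∀ x : ℝ, x ∈ L ↔ ∃ m n : ℤ, x = m * ω₁ + n * ω₂ := fun x =>
    Set.ext_iff.mp hLset x
  constructor
  · -- forward direction
    intro h
    -- pick an irrational integral element θ of F
    have hexists : ∃ f : F, ∀ q : ℚ, f ≠ algebraMap ℚ F q := by
      by_contra hc
      push_neg at hc
      have h1 : Module.finrank ℚ F ≤ 1 := by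
        apply finrank_le_one (1 : F)
        intro w
        obtain ⟨q, hq⟩ := hc w
        exact ⟨q, by rw [hq, Algebra.smul_def, mul_one]⟩
      rw [hF] at h1; omega
    obtain ⟨f, hf⟩ := hexists
    have halg : ∀ x : F, IsAlgebraic ℤ x := fun x =>
      (IsFractionRing.isAlgebraic_iff ℤ ℚ F).mpr (Algebra.IsAlgebraic.isAlgebraic x)
    have hinj : ∀ x : ℤ, algebraMap ℤ F x = 0 → x = 0 := by
      intro x hx
      have : ((x : ℤ) : F) = 0 := by rwa [← eq_intCast (algebraMap ℤ F) x]
      exact_mod_cast this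
    obtain ⟨y, z, hz0, hzy⟩ := exists_integral_multiple (halg f) hinj
    set θ : F := algebraMap ℤ F z * f with hθdef
    have hθint : IsIntegral ℤ θ := hzy ▸ y.2
    have hθirr : ∀ q : ℚ, θ ≠ algebraMap ℚ F q := by
      intro q hq
      apply hf (q / z)
      have hz : algebraMap ℤ F z = algebraMap ℚ F (z : ℚ) := by
        simp [eq_intCast, map_intCast]
      have hzQ : (z : ℚ) ≠ 0 := Int.cast_ne_zero.mpr hz0
      have hzF : algebraMap ℚ F (z : ℚ) ≠ 0 := fun h0 =>
        hzQ ((algebraMap ℚ F).injective (by simpa using h0))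
      rw [map_div₀, ← hq, hθdef, hz, mul_comm, mul_div_assoc, div_self hzF, mul_one]
    -- θ as an element of 𝓞 F
    have hθmem : ι θ ∈ {α : ℝ | ∀ x ∈ L, α * x ∈ L} := by
      rw [h]
      exact ⟨⟨θ, hθint⟩, rfl⟩
    have hmul : ∀ a : 𝓞 F, ∀ x ∈ L, ι (algebraMap (𝓞 F) F a) * x ∈ L := by
      intro a x hx
      have : ι (algebraMap (𝓞 F) F a) ∈ {α : ℝ | ∀ x ∈ L, α * x ∈ L} := by
        rw [h]; exact ⟨a, rfl⟩
      exact this x hx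
    have hω₁L : ω₁ ∈ L := (memL ω₁).mpr ⟨1, 0, by push_cast; ring⟩
    obtain ⟨a, b, hab⟩ := (memL _).mp (hθmem ω₁ hω₁L)
    have hb : b ≠ 0 := by
      intro hb0
      subst hb0
      have : ι θ = (a : ℝ) := by
        apply mul_right_cancel₀ hω₁
        rw [hab]; norm_num
      apply hθirr (a : ℚ)
      apply hι
      rw [this]
      simp [map_intCast]
    set τ : F := (θ - algebraMap ℤ F a) / algebraMap ℤ F b with hτdef
    have hbR : ((b : ℤ) : ℝ) ≠ 0 := Int.cast_ne_zero.mpr hb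
    have hιint : ∀ k : ℤ, ι (algebraMap ℤ F k) = (k : ℝ) := by
      intro k; simp [eq_intCast, map_intCast]
    have hτω : ι τ * ω₁ = ω₂ := by
      rw [hτdef, map_div₀, map_sub, hιint, hιint, div_mul_eq_mul_div, sub_mul, hab,
        div_eq_iff hbR]
      ring
    -- the submodule
    set P : Submodule (𝓞 F) F :=
      { carrier := {x : F | ω₁ * ι x ∈ L}
        add_mem' := fun {x y} hx hy => by
          simp only [Set.mem_setOf_eq, map_add, mul_add] at *
          exact add_mem hx hy
        zero_mem' := by
          simp only [Set.mem_setOf_eq, map_zero, mul_zero]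
          exact L.zero_mem
        smul_mem' := fun a x hx => by
          simp only [Set.mem_setOf_eq] at *
          have h2 : ω₁ * ι (a • x) = ι (algebraMap (𝓞 F) F a) * (ω₁ * ι x) := by
            rw [Algebra.smul_def, map_mul]; ring
          rw [h2]
          exact hmul a _ hx } with hPdef
    have memP : ∀ x : F, x ∈ P ↔ ω₁ * ι x ∈ L := fun x => Iff.rfl
    have charP : ∀ x : F, x ∈ P ↔ ∃ m n : ℤ, x = algebraMap ℤ F m + algebraMap ℤ F n * τ := by
      intro x
      rw [memP]
      constructor
      · intro hx
        obtain ⟨m, n, hmn⟩ := (memL _).mp hx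
        refine ⟨m, n, hι ?_⟩
        have : ω₁ * ι x = ω₁ * ι (algebraMap ℤ F m + algebraMap ℤ F n * τ) := by
          rw [hmn, map_add, map_mul, hιint, hιint, mul_add, ← hτω]; ring
        exact mul_left_cancel₀ hω₁ this
      · rintro ⟨m, n, rfl⟩
        apply (memL _).mpr
        refine ⟨m, n, ?_⟩
        rw [map_add, map_mul, hιint, hιint, mul_add, ← hτω]; ring
    -- P is fractional
    obtain ⟨yτ, d, hd0, hdτ⟩ := exists_integral_multiple (halg τ) hinj
    have hfrac : IsFractional (𝓞 F)⁰ P := by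
      refine ⟨algebraMap ℤ (𝓞 F) d, ?_, ?_⟩
      · apply mem_nonZeroDivisors_of_ne_zero
        intro h0
        apply hd0
        have : ((d : ℤ) : 𝓞 F) = 0 := by rwa [← eq_intCast (algebraMap ℤ (𝓞 F)) d]
        exact_mod_cast this
      · intro x hx
        obtain ⟨m, n, rfl⟩ := (charP x).mp hx
        have key : (algebraMap ℤ (𝓞 F) d) • (algebraMap ℤ F m + algebraMap ℤ F n * τ)
            = algebraMap (𝓞 F) F (algebraMap ℤ (𝓞 F) (d * m) + algebraMap ℤ (𝓞 F) n * ⟨↑yτ, yτ.2⟩) := by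
          have h1 : algebraMap (𝓞 F) F ⟨↑yτ, yτ.2⟩ = algebraMap ℤ F d * τ := by
            rw [RingOfIntegers.map_mk, hdτ]
          rw [Algebra.smul_def, map_add,
            map_mul (algebraMap (𝓞 F) F) (algebraMap ℤ (𝓞 F) n) ⟨↑yτ, yτ.2⟩, h1]
          simp only [map_mul, ← IsScalarTower.algebraMap_apply ℤ (𝓞 F) F]
          ring
        rw [key]
        exact ⟨_, rfl⟩
    refine ⟨⟨P, hfrac⟩, ω₁, ?_, hω₁, ?_⟩
    · intro h0
      have h1 : (1 : F) ∈ P := (memP 1).mpr (by simpa using hω₁L)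
      have : (1 : F) ∈ ((0 : FractionalIdeal (𝓞 F)⁰ F) : Submodule (𝓞 F) F) := h0 ▸ h1
      rw [FractionalIdeal.coe_zero] at this
      simpa using this
    · ext x
      constructor
      · intro hx
        obtain ⟨m, n, rfl⟩ := (memL _).mp hx
        refine ⟨algebraMap ℤ F m + algebraMap ℤ F n * τ, (charP _).mpr ⟨m, n, rfl⟩, ?_⟩
        simp only
        rw [map_add, map_mul, hιint, hιint, mul_add, ← hτω]; ring
      · rintro ⟨z, hz, rfl⟩
        exact (memP z).mp hz
  · -- backward direction
    rintro ⟨J, lam, hJ0, hlam, hset⟩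
    have memL' : ∀ x : ℝ, x ∈ L ↔ ∃ z ∈ (J : Submodule (𝓞 F) F), lam * ι z = x := by
      intro x
      constructor
      · intro hx
        have : x ∈ (L : Set ℝ) := hx
        rw [hset] at this
        obtain ⟨z, hz, hzx⟩ := this
        exact ⟨z, hz, hzx⟩
      · rintro ⟨z, hz, rfl⟩
        show lam * ι z ∈ (L : Set ℝ)
        rw [hset]
        exact ⟨z, hz, rfl⟩
    ext α
    simp only [Set.mem_setOf_eq, Set.mem_range]
    constructor
    · intro hα
      -- get a nonzero element of J
      have hJbot : (J : Submodule (𝓞 F) F) ≠ ⊥ :=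
        fun h0 => hJ0 (FractionalIdeal.coeToSubmodule_eq_bot.mp h0)
      obtain ⟨z₀, hz₀J, hz₀⟩ := Submodule.ne_bot_iff _ |>.mp hJbot
      have hιz₀ : ι z₀ ≠ 0 := fun h0 => hz₀ (by simpa using hι (h0.trans (map_zero ι).symm))
      have hz₀L : lam * ι z₀ ∈ L := (memL' _).mpr ⟨z₀, hz₀J, rfl⟩
      obtain ⟨w, hwJ, hw⟩ := (memL' _).mp (hα _ hz₀L)
      set β : F := w / z₀ with hβdef
      have hαβ : α = ι β := by
        rw [hβdef, map_div₀]
        field_simp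
        apply mul_left_cancel₀ hlam
        rw [hw]; ring
      have hstab : ∀ z ∈ (J : Submodule (𝓞 F) F), β • z ∈ (J : Submodule (𝓞 F) F) := by
        intro z hz
        have hzL : lam * ι z ∈ L := (memL' _).mpr ⟨z, hz, rfl⟩
        obtain ⟨w', hw'J, hw'⟩ := (memL' _).mp (hα _ hzL)
        have : β * z = w' := by
          apply hι
          apply mul_left_cancel₀ hlam
          rw [map_mul, ← mul_assoc, mul_comm lam (ι β), mul_assoc, ← hαβ, hw']
        rw [smul_eq_mul, this]
        exact hw'J
      have hfg : (J : Submodule (𝓞 F) F).FG :=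
        FractionalIdeal.fg_of_isNoetherianRing (le_refl _) J
      have hint : IsIntegral (𝓞 F) β :=
        isIntegral_of_smul_mem_submodule (J : Submodule (𝓞 F) F) hJbot hfg β hstab
      have hβZ : IsIntegral ℤ β := isIntegral_trans β hint
      exact ⟨⟨β, (mem_integralClosure_iff ℤ F).mpr hβZ⟩, by rw [RingOfIntegers.map_mk, hαβ]⟩
    · rintro ⟨a, rfl⟩
      intro x hx
      obtain ⟨z, hz, rfl⟩ := (memL' _).mp hx
      apply (memL' _).mpr
      refine ⟨algebraMap (𝓞 F) F a * z, ?_, ?_⟩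
      · have : algebraMap (𝓞 F) F a * z = a • z := (Algebra.smul_def a z).symm
        rw [this]
        exact Submodule.smul_mem _ a hz
      · rw [map_mul]; ring
end

section
/- Let F be a real quadratic field embedded in ℝ. For pseudolattices L, M in ℝ both with multiplier ring equal to O_F, there exists a fractional ideal 𝔞 of F and a nonzero real λ such that 𝔞·L = λM; i.e., the action of the ideal group on homothety classes of such pseudolattices is transitive. -/
open NumberField
open scoped nonZeroDivisors

lemma exists_irrational_integer (F : Type*) [Field F] [NumberField F]
    (hF : Module.finrank ℚ F = 2) (ι : F →+* ℝ) :
    ∃ a : 𝓞 F, ι (algebraMap (𝓞 F) F a) ∉ Set.range ((↑) : ℚ → ℝ) := by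
  -- first find z : F not in the image of ℚ
  have hz : ∃ z : F, z ∉ Set.range (algebraMap ℚ F) := by
    by_contra h
    push_neg at h
    have hbij : Function.Bijective (Algebra.linearMap ℚ F) :=
      ⟨fun x y hxy => by
        exact (algebraMap ℚ F).injective hxy, fun z => h z⟩
    have := LinearEquiv.finrank_eq (LinearEquiv.ofBijective (Algebra.linearMap ℚ F) hbij)
    rw [Module.finrank_self, hF] at this
    norm_num at this
  obtain ⟨z, hz⟩ := hz
  have hzirr : ι z ∉ Set.range ((↑) : ℚ → ℝ) := by
    rintro ⟨q, hq⟩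
    apply hz
    refine ⟨q, ι.injective ?_⟩
    rw [← hq]
    exact (eq_ratCast (ι.comp (algebraMap ℚ F)) q).symm ▸ rfl
  -- clear denominators
  have halg : IsAlgebraic ℤ z := by
    rw [IsFractionRing.isAlgebraic_iff ℤ ℚ F]
    exact Algebra.IsAlgebraic.isAlgebraic z
  obtain ⟨y, hy, hint⟩ := halg.exists_integral_multiple
  obtain ⟨x, hxy⟩ : ∃ x : 𝓞 F, (algebraMap ℤ F) y * z = algebraMap (𝓞 F) F x :=
    ⟨⟨y • z, hint⟩, by rw [← Algebra.smul_def]; rfl⟩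
  refine ⟨x, fun ⟨q, hq⟩ => hzirr ⟨q / y, ?_⟩⟩
  have hyR : ((y : ℤ) : ℝ) ≠ 0 := Int.cast_ne_zero.mpr hy
  have h3 : (y : ℝ) * ι z = (q : ℝ) := by
    rw [hq]
    rw [show ι ((algebraMap (𝓞 F) F) x) = ι ((algebraMap ℤ F) y * z) by rw [hxy]]
    rw [map_mul]
    congr 1
    rw [show (algebraMap ℤ F) y = ((y : ℤ) : F) from (eq_intCast (algebraMap ℤ F) y) , map_intCast]
  push_cast
  rw [div_eq_iff hyR]
  linarith

lemma pseudo_repr (F : Type*) [Field F] [NumberField F]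
    (hF : Module.finrank ℚ F = 2)
    (ι : F →+* ℝ) (L : AddSubgroup ℝ) (hL : IsPseudolattice L)
    (hLend : {α : ℝ | ∀ x ∈ L, α * x ∈ L} =
      Set.range (fun a : 𝓞 F => ι (algebraMap (𝓞 F) F a))) :
    ∃ (A : FractionalIdeal (𝓞 F)⁰ F) (ω : ℝ), A ≠ 0 ∧ ω ≠ 0 ∧
      (L : Set ℝ) = (fun b : F => ι b * ω) '' (A : Submodule (𝓞 F) F) := by
  obtain ⟨-, ω₁, ω₂, hind, hset⟩ := hL
  have h2 : ω₂ ≠ 0 := by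
    have := hind.ne_zero 1
    simpa using this
  obtain ⟨a, hairr⟩ := exists_irrational_integer F hF ι
  set α := ι (algebraMap (𝓞 F) F a) with hα
  have hmulgen : ∀ (c : 𝓞 F), ∀ x ∈ L, ι (algebraMap (𝓞 F) F c) * x ∈ L := by
    intro c
    have : ι (algebraMap (𝓞 F) F c) ∈ {α : ℝ | ∀ x ∈ L, α * x ∈ L} := by
      rw [hLend]; exact ⟨c, rfl⟩
    exact this
  have hmul : ∀ x ∈ L, α * x ∈ L := hmulgen a
  have hω₂L : ω₂ ∈ L := by
    have : ω₂ ∈ (L : Set ℝ) := by rw [hset]; exact ⟨0, 1, by push_cast; ring⟩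
    exact this
  have hω₁L : ω₁ ∈ L := by
    have : ω₁ ∈ (L : Set ℝ) := by rw [hset]; exact ⟨1, 0, by push_cast; ring⟩
    exact this
  have : α * ω₂ ∈ (L : Set ℝ) := hmul _ hω₂L
  rw [hset] at this
  obtain ⟨m, n, hmn⟩ := this
  have hm : m ≠ 0 := by
    rintro rfl
    apply hairr
    have : α = (n : ℝ) := by
      field_simp at hmn
      have h0 : (α - n) * ω₂ = 0 := by push_cast at hmn; linarith
      exact sub_eq_zero.mp ((mul_eq_zero.mp h0).resolve_right h2)
    exact ⟨(n : ℚ), by rw [this]; push_cast; rfl⟩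
  set t : F := (algebraMap (𝓞 F) F a - (n : F)) / (m : F) with ht
  have hmF : (m : F) ≠ 0 := Int.cast_ne_zero.mpr hm
  have hmR : (m : ℝ) ≠ 0 := Int.cast_ne_zero.mpr hm
  have hιt : ι t * ω₂ = ω₁ := by
    have h1 : ι t = (α - n) / m := by
      rw [ht]; push_cast [map_div₀, map_sub, map_intCast]; rfl
    rw [h1]
    field_simp
    linarith [hmn]
  set A : Submodule (𝓞 F) F := Submodule.span (𝓞 F) {t, 1} with hA
  have hfrac : IsFractional (𝓞 F)⁰ A :=
    FractionalIdeal.isFractional_of_fg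
      (Submodule.fg_span ((Set.finite_singleton (1:F)).insert t))
  have htA : t ∈ A := Submodule.subset_span (by simp)
  have h1A : (1 : F) ∈ A := Submodule.subset_span (by simp)
  refine ⟨⟨A, hfrac⟩, ω₂, ?_, h2, ?_⟩
  · intro h0
    have h1 : (1 : F) ∈ A := h1A
    rw [show A = ((⟨A, hfrac⟩ : FractionalIdeal (𝓞 F)⁰ F) : Submodule (𝓞 F) F) from rfl,
      h0] at h1
    simp at h1
  · ext x
    constructor
    · intro hx
      have hx' : x ∈ (L : Set ℝ) := hx
      rw [hset] at hx'
      obtain ⟨p, q, hpq⟩ := hx'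
      refine ⟨(p : F) * t + (q : F), ?_, ?_⟩
      · refine A.add_mem ?_ ?_
        · have := A.smul_mem ((p : ℤ) : 𝓞 F) htA
          simpa [Algebra.smul_def, map_intCast] using this
        · have := A.smul_mem ((q : ℤ) : 𝓞 F) h1A
          simpa [Algebra.smul_def, map_intCast] using this
      · simp only [map_add, map_mul, map_intCast]
        rw [hpq, add_mul, mul_assoc, hιt]
    · rintro ⟨b, hb, rfl⟩
      have hbmem : b ∈ A := hb
      refine Submodule.span_induction (p := fun b _ => ι b * ω₂ ∈ L) ?_ ?_ ?_ ?_ hbmem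
      · rintro y (rfl | rfl)
        · rw [hιt]; exact hω₁L
        · simpa using hω₂L
      · simpa using (L.zero_mem)
      · intro y z _ _ hy hz
        rw [map_add, add_mul]
        exact L.add_mem hy hz
      · intro c y _ hy
        have : ι (c • y) * ω₂ = ι (algebraMap (𝓞 F) F c) * (ι y * ω₂) := by
          rw [Algebra.smul_def, map_mul, mul_assoc]
        rw [this]
        exact hmulgen c _ hy

/-- for pseudolattices `L, M ⊆ ℝ` whose multiplier rings both equal
`O_F` (for a real quadratic field `F ⊆ ℝ`), there is a nonzero fractional ideal `𝔞`
of `F` and a nonzero real `λ` with `𝔞·L = λM`: the ideal group acts transitively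
on homothety classes of such pseudolattices. -/
theorem ideal_action_transitive
    (F : Type*) [Field F] [NumberField F] (hF : Module.finrank ℚ F = 2)
    (ι : F →+* ℝ) (L M : AddSubgroup ℝ)
    (hL : IsPseudolattice L) (hM : IsPseudolattice M)
    (hLend : {α : ℝ | ∀ x ∈ L, α * x ∈ L} =
      Set.range (fun a : 𝓞 F => ι (algebraMap (𝓞 F) F a)))
    (hMend : {α : ℝ | ∀ x ∈ M, α * x ∈ M} =
      Set.range (fun a : 𝓞 F => ι (algebraMap (𝓞 F) F a))) :
    ∃ (J : FractionalIdeal (𝓞 F)⁰ F) (lam : ℝ), J ≠ 0 ∧ lam ≠ 0 ∧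
      (AddSubgroup.closure
          {x : ℝ | ∃ u ∈ (J : Submodule (𝓞 F) F), ∃ l ∈ L, x = ι u * l} : Set ℝ) =
        (fun x : ℝ => lam * x) '' (M : Set ℝ) := by
  obtain ⟨AL, ωL, hAL0, hωL, hLrep⟩ := pseudo_repr F hF ι L hL hLend
  obtain ⟨AM, ωM, hAM0, hωM, hMrep⟩ := pseudo_repr F hF ι M hM hMend
  set J : FractionalIdeal (𝓞 F)⁰ F := AM * AL⁻¹ with hJ
  have hJA : J * AL = AM := by
    rw [hJ, mul_assoc, mul_comm AL⁻¹ AL, mul_inv_cancel₀ hAL0, mul_one]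
  have hJ0 : J ≠ 0 := by
    intro h
    apply hAM0
    rw [← hJA, h, zero_mul]
  set lam : ℝ := ωL / ωM with hlam
  have hlam0 : lam ≠ 0 := div_ne_zero hωL hωM
  refine ⟨J, lam, hJ0, hlam0, ?_⟩
  set S : Set ℝ := {x : ℝ | ∃ u ∈ (J : Submodule (𝓞 F) F), ∃ l ∈ L, x = ι u * l} with hS
  apply le_antisymm
  · -- closure S ⊆ lam • M
    intro x hx
    have hle : AddSubgroup.closure S ≤
        AddSubgroup.map (AddMonoidHom.mulLeft lam) M := by
      rw [AddSubgroup.closure_le]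
      rintro x ⟨u, hu, l, hl, rfl⟩
      have hl' : l ∈ (L : Set ℝ) := hl
      rw [hLrep] at hl'
      obtain ⟨b, hb, rfl⟩ := hl'
      have hub : u * b ∈ AM := by
        have := FractionalIdeal.mul_mem_mul (I := J) (J := AL)
          (FractionalIdeal.mem_coe.mp hu) (FractionalIdeal.mem_coe.mp hb)
        rwa [hJA] at this
      have hm : ι (u * b) * ωM ∈ M := by
        have : ι (u * b) * ωM ∈ (M : Set ℝ) := by
          rw [hMrep]
          exact ⟨u * b, FractionalIdeal.mem_coe.mpr hub, rfl⟩
        exact this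
      refine ⟨ι (u * b) * ωM, hm, ?_⟩
      show lam * (ι (u * b) * ωM) = ι u * (ι b * ωL)
      rw [map_mul, hlam]
      field_simp
    have := hle hx
    obtain ⟨y, hy, rfl⟩ := this
    exact ⟨y, hy, rfl⟩
  · -- lam • M ⊆ closure S
    rintro x ⟨y, hy, rfl⟩
    have hy' : y ∈ (M : Set ℝ) := hy
    rw [hMrep] at hy'
    obtain ⟨c, hc, rfl⟩ := hy'
    have hcm : c ∈ (J : Submodule (𝓞 F) F) * (AL : Submodule (𝓞 F) F) := by
      have : c ∈ ((J * AL : FractionalIdeal (𝓞 F)⁰ F) : Submodule (𝓞 F) F) := by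
        rw [hJA]; exact hc
      rwa [FractionalIdeal.coe_mul] at this
    have goal' : ι c * ωL ∈ AddSubgroup.closure S := by
      refine Submodule.mul_induction_on hcm ?_ ?_
      · intro u hu b hb
        apply AddSubgroup.subset_closure
        refine ⟨u, hu, ι b * ωL, ?_, ?_⟩
        · have : ι b * ωL ∈ (L : Set ℝ) := by
            rw [hLrep]; exact ⟨b, hb, rfl⟩
          exact this
        · rw [map_mul, mul_assoc]
      · intro p q hp hq
        rw [map_add, add_mul]
        exact (AddSubgroup.closure S).add_mem hp hq
    have heq : lam * (ι c * ωM) = ι c * ωL := by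
      rw [hlam]; field_simp
    show lam * (ι c * ωM) ∈ (AddSubgroup.closure S : Set ℝ)
    rw [heq]
    exact goal'
end

section
/- Let L be a pseudolattice in ℝ whose multiplier ring {α ∈ ℝ : αL ⊆ L} strictly contains ℤ, i.e., L has Real Multiplication. Then the fraction field of the multiplier ring is a real quadratic field, and the multiplier ring has ℤ-rank exactly 2. -/
/-- The multiplier set of an additive subgroup of `ℝ`, as a `ℤ`-submodule of `ℝ`. -/
def multSubmodule (L : AddSubgroup ℝ) : Submodule ℤ ℝ where
  carrier := {α : ℝ | ∀ x ∈ L, α * x ∈ L}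
  add_mem' := by
    intro a b ha hb x hx
    rw [add_mul]
    exact L.add_mem (ha x hx) (hb x hx)
  zero_mem' := by
    intro x hx
    simpa using L.zero_mem
  smul_mem' := by
    intro n a ha x hx
    rw [smul_mul_assoc]
    exact AddSubgroup.zsmul_mem L (ha x hx) n

/-- if the multiplier ring `End(L) = {α ∈ ℝ : αL ⊆ L}` of a
pseudolattice strictly contains `ℤ` (Real Multiplication), then its fraction field
is a real quadratic field and `End(L)` is free of rank exactly `2` over `ℤ`. -/
theorem real_multiplication_order_rank_two (L : AddSubgroup ℝ)
    (hL : IsPseudolattice L)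
    (hRM : {α : ℝ | ∀ x ∈ L, α * x ∈ L} ≠ Set.range (Int.cast : ℤ → ℝ)) :
    ∃ K : IntermediateField ℚ ℝ, Module.finrank ℚ K = 2 ∧
      {α : ℝ | ∀ x ∈ L, α * x ∈ L} ⊆ (K : Set ℝ) ∧
      (∀ y ∈ K, ∃ a b : ℝ, (∀ x ∈ L, a * x ∈ L) ∧ (∀ x ∈ L, b * x ∈ L) ∧
        b ≠ 0 ∧ y = a / b) ∧
      ∃ β₁ β₂ : ℝ, LinearIndependent ℚ ![β₁, β₂] ∧
        {α : ℝ | ∀ x ∈ L, α * x ∈ L} = {x : ℝ | ∃ m n : ℤ, x = m * β₁ + n * β₂} := by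
  obtain ⟨-, ω₁, ω₂, hind, hset⟩ := hL
  have hmem : ∀ x : ℝ, x ∈ L ↔ ∃ m n : ℤ, x = m * ω₁ + n * ω₂ := fun x =>
    Set.ext_iff.mp hset x
  have hω₁ : ω₁ ≠ 0 := by simpa using hind.ne_zero 0
  have hω₂0 : ω₂ ≠ 0 := by simpa using hind.ne_zero 1
  have hω₁L : ω₁ ∈ L := (hmem ω₁).mpr ⟨1, 0, by push_cast; ring⟩
  have hω₂L : ω₂ ∈ L := (hmem ω₂).mpr ⟨0, 1, by push_cast; ring⟩
  set E : Set ℝ := {α : ℝ | ∀ x ∈ L, α * x ∈ L} with hE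
  have hES : E = (multSubmodule L : Set ℝ) := rfl
  have hEω : ∀ β ∈ E, ∃ p q : ℤ, β * ω₁ = p * ω₁ + q * ω₂ := fun β hβ =>
    (hmem _).mp (hβ ω₁ hω₁L)
  have hZsub : Set.range (Int.cast : ℤ → ℝ) ⊆ E := by
    rintro _ ⟨n, rfl⟩ x hx
    rw [← zsmul_eq_mul]
    exact AddSubgroup.zsmul_mem L hx n
  obtain ⟨α, hαE, hαZ⟩ := Set.exists_of_ssubset (hZsub.ssubset_of_ne (Ne.symm hRM))
  obtain ⟨a, b, hab⟩ := hEω α hαE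
  obtain ⟨c, d, hcd⟩ : ∃ p q : ℤ, α * ω₂ = p * ω₁ + q * ω₂ :=
    (hmem _).mp (hαE ω₂ hω₂L)
  have hb : (b : ℝ) ≠ 0 := by
    intro h0
    apply hαZ
    refine ⟨a, ?_⟩
    have : α * ω₁ = (a : ℝ) * ω₁ := by rw [hab, h0]; ring
    exact (mul_right_cancel₀ hω₁ this).symm
  -- quadratic relation
  have hquad : α ^ 2 = ((a : ℝ) + d) * α - ((a : ℝ) * d - b * c) := by
    have h1 : α ^ 2 * ω₁ = (((a : ℝ) + d) * α - ((a : ℝ) * d - b * c)) * ω₁ := by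
      linear_combination (α - (d : ℝ)) * hab + (b : ℝ) * hcd
    exact mul_right_cancel₀ hω₁ h1
  -- α is not rational
  have hirr : α ∉ Set.range ((↑) : ℚ → ℝ) := by
    rintro ⟨r, hr⟩
    have hrq : r ^ 2 = ((a : ℚ) + d) * r - ((a : ℚ) * d - b * c) := by
      have := hquad
      rw [← hr] at this
      exact_mod_cast this
    have hint : IsIntegral ℤ r := by
      refine ⟨Polynomial.X ^ 2 + (Polynomial.C (-(a + d)) * Polynomial.X +
        Polynomial.C (a * d - b * c)), ?_, ?_⟩
      · exact Polynomial.monic_X_pow_add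
          (lt_of_le_of_lt Polynomial.degree_linear_le (by decide))
      · simp only [Polynomial.eval₂_add, Polynomial.eval₂_mul, Polynomial.eval₂_pow,
          Polynomial.eval₂_X, Polynomial.eval₂_C]
        simp only [algebraMap_int_eq, Int.coe_castRingHom]
        push_cast
        linear_combination hrq
    obtain ⟨z, hz⟩ := IsIntegrallyClosed.isIntegral_iff.mp hint
    apply hαZ
    refine ⟨z, ?_⟩
    rw [← hr]
    have : ((z : ℚ) : ℝ) = (r : ℝ) := by
      norm_cast
    exact_mod_cast this
  have hαint : IsIntegral ℚ α := by
    refine ⟨Polynomial.X ^ 2 + (Polynomial.C (-((a : ℚ) + d)) * Polynomial.X +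
      Polynomial.C ((a : ℚ) * d - b * c)), ?_, ?_⟩
    · exact Polynomial.monic_X_pow_add
        (lt_of_le_of_lt Polynomial.degree_linear_le (by decide))
    · simp only [Polynomial.eval₂_add, Polynomial.eval₂_mul, Polynomial.eval₂_pow,
        Polynomial.eval₂_X, Polynomial.eval₂_C]
      simp only [eq_ratCast]
      push_cast
      linear_combination hquad
  set Q : Polynomial ℚ := Polynomial.X ^ 2 + (Polynomial.C (-((a : ℚ) + d)) * Polynomial.X +
      Polynomial.C ((a : ℚ) * d - b * c)) with hQ
  have hQmonic : Q.Monic :=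
    Polynomial.monic_X_pow_add (lt_of_le_of_lt Polynomial.degree_linear_le (by decide))
  have hQeval : Polynomial.aeval α Q = 0 := by
    rw [hQ]
    simp only [map_add, map_mul, map_pow, Polynomial.aeval_X, Polynomial.aeval_C]
    simp only [eq_ratCast]
    push_cast
    linear_combination hquad
  have hQdeg : Q.natDegree = 2 := by
    have h2 : Q = Polynomial.C 1 * Polynomial.X ^ 2 + Polynomial.C (-((a : ℚ) + d)) *
        Polynomial.X + Polynomial.C ((a : ℚ) * d - b * c) := by
      rw [hQ, Polynomial.C_1, one_mul, add_assoc]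
    rw [h2]
    exact Polynomial.natDegree_quadratic one_ne_zero
  have hdeg : (minpoly ℚ α).natDegree = 2 := by
    refine le_antisymm ?_ ?_
    · calc (minpoly ℚ α).natDegree ≤ Q.natDegree :=
            Polynomial.natDegree_le_of_dvd (minpoly.dvd ℚ α hQeval) hQmonic.ne_zero
        _ = 2 := hQdeg
    · refine (minpoly.two_le_natDegree_iff hαint).mpr ?_
      rintro ⟨r, hr⟩
      exact hirr ⟨r, by rw [← hr, eq_ratCast]⟩
  -- closure properties of E
  have hEadd : ∀ s t : ℝ, s ∈ E → t ∈ E → s + t ∈ E := fun s t hs ht =>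
    (multSubmodule L).add_mem hs ht
  have hEint : ∀ (n : ℤ) (t : ℝ), t ∈ E → (n : ℝ) * t ∈ E := fun n t ht => by
    have := (multSubmodule L).smul_mem n ht
    rwa [zsmul_eq_mul] at this
  have h1E : (1 : ℝ) ∈ E := fun x hx => by rwa [one_mul]
  refine ⟨IntermediateField.adjoin ℚ {α}, ?_, ?_, ?_, ?_⟩
  · rw [IntermediateField.adjoin.finrank hαint, hdeg]
  · -- E ⊆ K
    intro β hβ
    obtain ⟨p, q, hpq⟩ := hEω β hβ
    have key : β = ((p : ℝ) * b + q * (α - a)) / b := by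
      rw [eq_div_iff hb]
      have h1 : (β * b) * ω₁ = ((p : ℝ) * b + q * (α - a)) * ω₁ := by
        linear_combination (b : ℝ) * hpq - (q : ℝ) * hab
      exact mul_right_cancel₀ hω₁ h1
    rw [key]
    have hαK : α ∈ IntermediateField.adjoin ℚ {α} :=
      IntermediateField.mem_adjoin_simple_self ℚ α
    exact div_mem (add_mem (mul_mem (intCast_mem _ p) (intCast_mem _ b))
      (mul_mem (intCast_mem _ q) (sub_mem hαK (intCast_mem _ a)))) (intCast_mem _ b)
  · -- fraction field property
    intro y hy
    have hy2 : y ∈ Algebra.adjoin ℚ ({α} : Set ℝ) := by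
      rw [← IntermediateField.adjoin_simple_toSubalgebra_of_isAlgebraic hαint.isAlgebraic]
      exact hy
    rw [Algebra.adjoin_singleton_eq_range_aeval] at hy2
    obtain ⟨f, hf⟩ := hy2
    set m := minpoly ℚ α with hm
    have hmmonic : m.Monic := minpoly.monic hαint
    have hy3 : y = Polynomial.aeval α (f %ₘ m) := by
      conv_lhs => rw [← hf, ← Polynomial.modByMonic_add_div f m]
      simp [hm, minpoly.aeval]
    have hdle : (f %ₘ m).natDegree ≤ 1 := by
      have hm1 : m ≠ 1 := by
        intro h
        rw [h] at hdeg
        simp at hdeg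
      have h2 := Polynomial.natDegree_modByMonic_lt f hmmonic hm1
      rw [hdeg] at h2
      omega
    have hrc := Polynomial.eq_X_add_C_of_natDegree_le_one hdle
    set c1 := (f %ₘ m).coeff 1 with hc1
    set c0 := (f %ₘ m).coeff 0 with hc0
    have hy4 : y = (c1 : ℝ) * α + (c0 : ℝ) := by
      rw [hy3]
      conv_lhs => rw [hrc]
      simp only [map_add, map_mul, Polynomial.aeval_X, Polynomial.aeval_C]
      simp only [eq_ratCast]
    have hN0 : (((c0.den : ℤ) * (c1.den : ℤ) : ℤ) : ℝ) ≠ 0 := by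
      push_cast
      exact mul_ne_zero (Nat.cast_ne_zero.mpr c0.den_nz) (Nat.cast_ne_zero.mpr c1.den_nz)
    refine ⟨((c1.num * c0.den : ℤ) : ℝ) * α + ((c0.num * c1.den : ℤ) : ℝ),
      (((c0.den : ℤ) * (c1.den : ℤ) : ℤ) : ℝ), ?_, ?_, hN0, ?_⟩
    · exact hEadd _ _ (hEint _ _ hαE) (hZsub ⟨_, rfl⟩)
    · exact hZsub ⟨_, rfl⟩
    · rw [hy4, eq_div_iff hN0]
      have e1 : (c1 : ℝ) * (c1.den : ℝ) = (c1.num : ℝ) := by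
        rw [Rat.cast_def]
        field_simp
      have e0 : (c0 : ℝ) * (c0.den : ℝ) = (c0.num : ℝ) := by
        rw [Rat.cast_def]
        field_simp
      push_cast
      linear_combination ((c0.den : ℝ) * α) * e1 + (c1.den : ℝ) * e0
  · -- rank two
    have hindZ : LinearIndependent ℤ ![ω₁, ω₂] :=
      (LinearIndependent.iff_fractionRing ℤ ℚ).mpr hind
    set T : Submodule ℤ ℝ := Submodule.span ℤ (Set.range ![ω₁, ω₂]) with hT
    let bT : Module.Basis (Fin 2) ℤ T := Module.Basis.span hindZ
    have hLT : ∀ x : ℝ, x ∈ L → x ∈ T := by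
      intro x hx
      obtain ⟨mm, nn, rfl⟩ := (hmem x).mp hx
      have h1 : ω₁ ∈ T := Submodule.subset_span ⟨0, rfl⟩
      have h2 : ω₂ ∈ T := Submodule.subset_span ⟨1, rfl⟩
      have h3 := T.add_mem (T.smul_mem mm h1) (T.smul_mem nn h2)
      simpa [zsmul_eq_mul] using h3
    let g : multSubmodule L →ₗ[ℤ] T :=
      { toFun := fun s => ⟨(s : ℝ) * ω₁, hLT _ (s.2 ω₁ hω₁L)⟩
        map_add' := by intro s t; ext; simp [add_mul]
        map_smul' := by intro n s; ext; simp [smul_mul_assoc, mul_assoc]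
        }
    have hginj : Function.Injective g := by
      intro s t hst
      have h2 : (s : ℝ) * ω₁ = (t : ℝ) * ω₁ := congrArg Subtype.val hst
      exact Subtype.ext (mul_right_cancel₀ hω₁ h2)
    obtain ⟨n, bN⟩ := Submodule.basisOfPid bT (LinearMap.range g)
    let e : multSubmodule L ≃ₗ[ℤ] LinearMap.range g := LinearEquiv.ofInjective g hginj
    let bS : Module.Basis (Fin n) ℤ (multSubmodule L) := bN.map e.symm
    haveI hfinS : Module.Finite ℤ (multSubmodule L) := Module.Finite.of_basis bS
    haveI hfinT : Module.Finite ℤ T := Module.Finite.of_basis bT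
    have hrankS : Module.finrank ℤ (multSubmodule L) = n := by
      rw [Module.finrank_eq_card_basis bS, Fintype.card_fin]
    have hn2 : n = 2 := by
      have hle : Module.finrank ℤ (multSubmodule L) ≤ 2 := by
        have h1 : Module.finrank ℤ (LinearMap.range g) ≤ Module.finrank ℤ T :=
          Submodule.finrank_le _
        rw [Module.finrank_eq_card_basis bN, Fintype.card_fin] at h1
        rw [Module.finrank_eq_card_basis bT, Fintype.card_fin] at h1
        omega
      have hge : 2 ≤ Module.finrank ℤ (multSubmodule L) := by
        have hli2 : LinearIndependent ℤ ![(1 : ℝ), α] := by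
          refine (LinearIndependent.iff_fractionRing ℤ ℚ).mpr ?_
          rw [LinearIndependent.pair_iff' one_ne_zero]
          intro s hs
          exact hirr ⟨s, by simpa using hs⟩
        have hui : LinearIndependent ℤ
            (![(⟨1, h1E⟩ : multSubmodule L), ⟨α, hαE⟩] : Fin 2 → multSubmodule L) := by
          apply LinearIndependent.of_comp ((multSubmodule L).subtype)
          have heq : ((multSubmodule L).subtype ∘
              ![(⟨1, h1E⟩ : multSubmodule L), ⟨α, hαE⟩]) = ![(1 : ℝ), α] := by
            funext i
            fin_cases i <;> rfl
          rw [heq]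
          exact hli2
        simpa using hui.fintype_card_le_finrank
      omega
    let bS2 : Module.Basis (Fin 2) ℤ (multSubmodule L) := bS.reindex (finCongr hn2)
    refine ⟨(bS2 0 : ℝ), (bS2 1 : ℝ), ?_, ?_⟩
    · have hli : LinearIndependent ℤ ((multSubmodule L).subtype ∘ bS2) :=
        bS2.linearIndependent.map' _ (Submodule.ker_subtype _)
      refine (LinearIndependent.iff_fractionRing ℤ ℚ).mp ?_
      have heq : ![((bS2 0 : multSubmodule L) : ℝ), ((bS2 1 : multSubmodule L) : ℝ)] =
          (multSubmodule L).subtype ∘ bS2 := by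
        funext i
        fin_cases i <;> rfl
      rw [heq]
      exact hli
    · ext x
      constructor
      · intro hx
        have hsum := bS2.sum_repr ⟨x, hx⟩
        rw [Fin.sum_univ_two] at hsum
        refine ⟨bS2.repr ⟨x, hx⟩ 0, bS2.repr ⟨x, hx⟩ 1, ?_⟩
        have := congrArg (Subtype.val) hsum
        simp only [Submodule.coe_add, Submodule.coe_smul, zsmul_eq_mul] at this
        exact this.symm
      · rintro ⟨mm, nn, rfl⟩
        exact hEadd _ _ (hEint _ _ (bS2 0).2) (hEint _ _ (bS2 1).2)
end
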